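/- arXiv:1403.3764 — 4 statements merged into one kernel-verified Lean document; each statement's English description precedes it below -/
import Mathlib

section
/- (Local existence and uniqueness, Theorem 1, local part.) Let n ≥ 1 and T > 0. Let α_0, α_1, …, α_n : [0,T] → ℝ with α_0(t) = 0 and α_n(t) = t for all t, each α_i continuously differentiable, α_i(0) = 0, and 0 = α_0(t) < α_1(t) < ⋯ < α_{n-1}(t) < α_n(t) = t for all t ∈ (0,T]. Let K_1, …, K_n : [0,T] × [0,T] → ℝ be continuous and have continuous partial derivatives with respect to the first variable t, let f : [0,T] → ℝ be continuously differentiable with f(0) = 0, and suppose K_n(t,t) ≠ 0 for all t ∈ [0,T]. If D(0) < 1, then there exists τ ∈ (0,T] such that there is exactly one continuous function x : [0,τ] → ℝ satisfying Σ_{i=1}^{n} ∫_{α_{i-1}(t)}^{α_i(t)} K_i(t,s) x(s) ds = f(t) for every t ∈ [0,τ]. -/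
/-!
For continuous `x`, the Leibniz rule and `f 0 = 0` turn the equation into the second-kind equation
`K_n(t,t) x(t) + Σ_{i<n} α_i'(t) (K_i - K_{i+1})(t, α_i t) x(α_i t)
  + Σ_i ∫_{α_{i-1} t}^{α_i t} ∂_t K_i(t,s) x(s) ds = f'(t)`:
the boundary terms of neighbouring integrals telescope into the jumps of the kernel along the
curves. Solving for `x(t)` gives a map on `C[0,τ]` with Lipschitz constant at most
`max_{[0,τ]} D + O(τ)`. Since `D` is continuous with `D(0) < 1`, this is a contraction for small
`τ`, and Banach's fixed point theorem gives existence and uniqueness. The data are first extended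
from `[0,T]` to `ℝ` through `projIcc` so that every integrand is continuous on the whole plane.
-/

open intervalIntegral Set Function

theorem continuous_parametric_intervalIntegral_moving_bounds {F : ℝ → ℝ → ℝ}
    (hF : Continuous (uncurry F)) {a b : ℝ → ℝ} (ha : Continuous a) (hb : Continuous b) :
    Continuous fun t ↦ ∫ s in a t..b t, F t s := by
  have hFt (t : ℝ) : Continuous (F t) := hF.comp (Continuous.prodMk_right t)
  have h (t : ℝ) : ∫ s in a t..b t, F t s =
      (∫ s in (0 : ℝ)..b t, F t s) - ∫ s in (0 : ℝ)..a t, F t s :=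
    (integral_interval_sub_left ((hFt t).intervalIntegrable _ _)
      ((hFt t).intervalIntegrable _ _)).symm
  simp_rw [h]
  exact (continuous_parametric_intervalIntegral_of_continuous hF hb).sub
    (continuous_parametric_intervalIntegral_of_continuous hF ha)

theorem integral_moving_bounds_eq {h : ℝ → ℝ} (hh : Continuous h) {a b a' b' : ℝ → ℝ}
    {w t : ℝ} (hwt : w ≤ t) (ha : ContinuousOn a (Icc w t)) (hb : ContinuousOn b (Icc w t))
    (ha' : ContinuousOn a' (Icc w t)) (hb' : ContinuousOn b' (Icc w t))
    (had : ∀ u ∈ Ioo w t, HasDerivAt a (a' u) u) (hbd : ∀ u ∈ Ioo w t, HasDerivAt b (b' u) u) :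
    ∫ s in a t..b t, h s =
      (∫ s in a w..b w, h s) + ∫ u in w..t, (b' u * h (b u) - a' u * h (a u)) := by
  have subst {c c' : ℝ → ℝ} (hc : ContinuousOn c (Icc w t)) (hc' : ContinuousOn c' (Icc w t))
      (hcd : ∀ u ∈ Ioo w t, HasDerivAt c (c' u) u) :
      ∫ u in w..t, c' u * h (c u) = ∫ s in c w..c t, h s := by
    rw [← integral_comp_mul_deriv'' (uIcc_of_le hwt ▸ hc)
      (by simpa [hwt] using fun u hu ↦ (hcd u hu).hasDerivWithinAt)
      (uIcc_of_le hwt ▸ hc') hh.continuousOn]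
    simp only [comp_apply, mul_comm]
  have hint {c c' : ℝ → ℝ} (hc : ContinuousOn c (Icc w t)) (hc' : ContinuousOn c' (Icc w t)) :
      IntervalIntegrable (fun u ↦ c' u * h (c u)) MeasureTheory.volume w t :=
    ((hc'.mul (hh.comp_continuousOn hc)).mono (uIcc_of_le hwt).subset).intervalIntegrable
  rw [integral_sub (hint hb hb') (hint ha ha'), subst hb hb' hbd, subst ha ha' had]
  have hi (x y : ℝ) : IntervalIntegrable h MeasureTheory.volume x y := hh.intervalIntegrable x y
  linarith [integral_add_adjacent_intervals (hi (a w) (b w)) (hi (b w) (b t)),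
    integral_add_adjacent_intervals (hi (a w) (a t)) (hi (a t) (b t))]

open MeasureTheory in
theorem intervalIntegral_swap_of_continuous {F : ℝ → ℝ → ℝ} (hF : Continuous (uncurry F))
    (a b c d : ℝ) : ∫ x in a..b, ∫ y in c..d, F x y = ∫ y in c..d, ∫ x in a..b, F x y :=
  intervalIntegral_intervalIntegral_swap <|
    (hF.continuousOn.integrableOn_compact (isCompact_uIcc.prod isCompact_uIcc)).mono_set
      (prod_mono uIoc_subset_uIcc uIoc_subset_uIcc)

open MeasureTheory in
theorem intervalIntegral_swap_triangle_of_continuous {F : ℝ → ℝ → ℝ}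
    (hF : Continuous (uncurry F)) {a b : ℝ} (hab : a ≤ b) :
    ∫ u in a..b, ∫ v in a..u, F v u = ∫ v in a..b, ∫ u in v..b, F v u := by
  set G : ℝ → ℝ → ℝ := fun v u ↦ {p : ℝ × ℝ | p.1 ≤ p.2}.indicator (uncurry F) (v, u)
  have hG : IntegrableOn (uncurry G) (uIoc a b ×ˢ uIoc a b) :=
    ((hF.continuousOn.integrableOn_compact (isCompact_uIcc.prod isCompact_uIcc)).mono_set
      (prod_mono uIoc_subset_uIcc uIoc_subset_uIcc)).indicator
      (measurableSet_le measurable_fst measurable_snd)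
  have lower {u : ℝ} (hu : u ∈ Icc a b) : ∫ v in a..u, F v u = ∫ v in a..b, G v u := by
    have : (G · u) = (Iic u).indicator (F · u) := by
      ext v; by_cases h : v ≤ u <;> simp [G, h]
    rw [integral_of_le hu.1, integral_of_le hab, this, setIntegral_indicator measurableSet_Iic,
      Ioc_inter_Iic, inf_eq_right.2 hu.2]
  have upper {v : ℝ} (hv : v ∈ Icc a b) : ∫ u in v..b, F v u = ∫ u in a..b, G v u := by
    have : G v =ᵐ[volume] (Ioi v).indicator (F v) := by
      filter_upwards [Measure.ae_ne volume v] with u hu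
      rcases hu.lt_or_gt with h | h
      · simp [G, not_le.2 h, not_lt.2 h.le]
      · simp [G, h, h.le]
    rw [integral_of_le hv.2, integral_of_le hab, integral_congr_ae (ae_restrict_of_ae this),
      setIntegral_indicator measurableSet_Ioi, Ioc_inter_Ioi, sup_eq_right.2 hv.1]
  rw [integral_congr (fun u hu ↦ lower (uIcc_of_le hab ▸ hu)),
    integral_congr (fun v hv ↦ upper (uIcc_of_le hab ▸ hv))]
  exact (intervalIntegral_intervalIntegral_swap hG).symm

theorem integral_integral_moving_bounds_eq {Q : ℝ → ℝ → ℝ} (hQ : Continuous (uncurry Q))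
    {a b a' b' : ℝ → ℝ} (ha : Continuous a) (hb : Continuous b) (ha' : Continuous a')
    (hb' : Continuous b') {t : ℝ} (ht : 0 ≤ t) (had : ∀ u ∈ Ioo 0 t, HasDerivAt a (a' u) u)
    (hbd : ∀ u ∈ Ioo 0 t, HasDerivAt b (b' u) u) :
    ∫ v in 0..t, ∫ s in a t..b t, Q v s =
      (∫ u in 0..t, ∫ s in a u..b u, Q u s) +
        ∫ u in 0..t, ∫ v in 0..u, (b' u * Q v (b u) - a' u * Q v (a u)) := by
  set φ : ℝ → ℝ → ℝ := fun v u ↦ b' u * Q v (b u) - a' u * Q v (a u)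
  have hφ : Continuous (uncurry φ) :=
    ((hb'.comp continuous_snd).mul (hQ.comp (continuous_fst.prodMk (hb.comp continuous_snd)))).sub
      ((ha'.comp continuous_snd).mul (hQ.comp (continuous_fst.prodMk (ha.comp continuous_snd))))
  have slice (v : ℝ) (hv : v ∈ uIcc 0 t) :
      ∫ s in a t..b t, Q v s = (∫ s in a v..b v, Q v s) + ∫ u in v..t, φ v u := by
    rw [uIcc_of_le ht] at hv
    exact integral_moving_bounds_eq (hQ.comp (Continuous.prodMk_right v)) hv.2 ha.continuousOn
      hb.continuousOn ha'.continuousOn hb'.continuousOn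
      (fun u hu ↦ had u ⟨hv.1.trans_lt hu.1, hu.2⟩) (fun u hu ↦ hbd u ⟨hv.1.trans_lt hu.1, hu.2⟩)
  rw [integral_congr slice, integral_add
    ((continuous_parametric_intervalIntegral_moving_bounds hQ ha hb).intervalIntegrable _ _)
    ((continuous_parametric_intervalIntegral_moving_bounds hφ continuous_id'
      (continuous_const (y := t))).intervalIntegrable _ _),
    intervalIntegral_swap_triangle_of_continuous hφ ht]

/-- Leibniz rule for `∫_{a t}^{b t} G t s ds` in integrated form, `G'` being `∂G/∂t`. -/
theorem integral_moving_bounds_eq_integral_leibniz {G G' : ℝ → ℝ → ℝ}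
    (hG0 : Continuous (G 0)) (hG' : Continuous (uncurry G')) {a b a' b' : ℝ → ℝ}
    (ha : Continuous a) (hb : Continuous b) (ha' : Continuous a') (hb' : Continuous b')
    {t : ℝ} (ht : 0 ≤ t) (had : ∀ u ∈ Ioo 0 t, HasDerivAt a (a' u) u)
    (hbd : ∀ u ∈ Ioo 0 t, HasDerivAt b (b' u) u) (hab : a 0 = b 0)
    (hG : ∀ u ∈ Icc 0 t, ∀ s, G u s = G 0 s + ∫ v in 0..u, G' v s) :
    ∫ s in a t..b t, G t s =
      ∫ u in 0..t, (b' u * G u (b u) - a' u * G u (a u) + ∫ s in a u..b u, G' u s) := by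
  have hii {f : ℝ → ℝ} (hf : Continuous f) : IntervalIntegrable f MeasureTheory.volume 0 t :=
    hf.intervalIntegrable 0 t
  have hA : Continuous fun u ↦ b' u * G 0 (b u) - a' u * G 0 (a u) :=
    (hb'.mul (hG0.comp hb)).sub (ha'.mul (hG0.comp ha))
  have hB : Continuous fun u ↦ ∫ v in 0..u, (b' u * G' v (b u) - a' u * G' v (a u)) :=
    continuous_parametric_intervalIntegral_moving_bounds
      (F := fun u v ↦ b' u * G' v (b u) - a' u * G' v (a u))
      ((hb'.comp continuous_fst).mul (hG'.comp (continuous_snd.prodMk (hb.comp continuous_fst)))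
        |>.sub ((ha'.comp continuous_fst).mul
          (hG'.comp (continuous_snd.prodMk (ha.comp continuous_fst)))))
      continuous_const continuous_id
  have hC : Continuous fun u ↦ ∫ s in a u..b u, G' u s :=
    continuous_parametric_intervalIntegral_moving_bounds hG' ha hb
  have hsplit : ∫ s in a t..b t, G t s =
      (∫ s in a t..b t, G 0 s) + ∫ v in 0..t, ∫ s in a t..b t, G' v s := by
    have hP : Continuous fun s ↦ ∫ v in 0..t, G' v s :=
      continuous_parametric_intervalIntegral_of_continuous' (f := fun s v ↦ G' v s)
        (hG'.comp continuous_swap) 0 t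
    rw [integral_congr (fun s _ ↦ hG t ⟨ht, le_rfl⟩ s), integral_add (hG0.intervalIntegrable _ _)
      (hP.intervalIntegrable _ _), intervalIntegral_swap_of_continuous (F := fun s v ↦ G' v s)
      (hG'.comp continuous_swap)]
  have initial : ∫ s in a t..b t, G 0 s =
      ∫ u in 0..t, (b' u * G 0 (b u) - a' u * G 0 (a u)) := by
    rw [integral_moving_bounds_eq hG0 ht ha.continuousOn hb.continuousOn
      ha'.continuousOn hb'.continuousOn had hbd, hab, integral_same, zero_add]
  have integrand (u : ℝ) (hu : u ∈ uIcc 0 t) :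
      b' u * G u (b u) - a' u * G u (a u) + ∫ s in a u..b u, G' u s =
        (b' u * G 0 (b u) - a' u * G 0 (a u)) +
          (∫ v in 0..u, (b' u * G' v (b u) - a' u * G' v (a u))) + ∫ s in a u..b u, G' u s := by
    have hu' : u ∈ Icc 0 t := uIcc_of_le ht ▸ hu
    rw [hG u hu' (b u), hG u hu' (a u), integral_sub, integral_const_mul, integral_const_mul]
    · ring
    all_goals exact ((hG'.comp (continuous_id.prodMk continuous_const)).intervalIntegrable
      _ _).const_mul _
  rw [integral_congr integrand, integral_add ((hii hA).add (hii hB)) (hii hC),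
    integral_add (hii hA) (hii hB), hsplit, initial,
    integral_integral_moving_bounds_eq hG' ha hb ha' hb' ht had hbd]
  ring

theorem Finset.sum_Icc_sub_pred_eq {M : Type*} [AddCommGroup M] (g : ℕ → ℕ → M) {n : ℕ}
    (hn : 1 ≤ n) :
    ∑ i ∈ Finset.Icc 1 n, (g i i - g i (i - 1)) =
      g n n - g 1 0 + ∑ i ∈ Finset.Icc 1 (n - 1), (g i i - g (i + 1) i) := by
  induction n, hn using Nat.le_induction with
  | base => simp
  | succ m hm ih =>
    rw [Finset.sum_Icc_succ_top (by omega), ih, Nat.add_sub_cancel,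
      show m = m - 1 + 1 by omega, Finset.sum_Icc_succ_top (by omega)]
    simp only [Nat.sub_add_cancel hm]
    abel

theorem eq_add_integral_of_hasDerivAt {a b : ℝ} {G G' : ℝ → ℝ}
    (hG : ∀ t ∈ Icc a b, HasDerivAt G (G' t) t) (hG' : ContinuousOn G' (Icc a b))
    {t : ℝ} (ht : t ∈ Icc a b) : G t = G a + ∫ v in a..t, G' v := by
  have hsub : uIcc a t ⊆ Icc a b := uIcc_subset_Icc ⟨le_rfl, ht.1.trans ht.2⟩ ht
  rw [integral_eq_sub_of_hasDerivAt (fun v hv ↦ hG v (hsub hv))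
    ((hG'.mono hsub).intervalIntegrable), add_sub_cancel]

theorem eqOn_Icc_of_integral_eq {φ ψ : ℝ → ℝ} (hφ : Continuous φ) (hψ : Continuous ψ)
    {a b : ℝ} (hab : a < b) (h : ∀ t ∈ Icc a b, ∫ u in a..t, φ u = ∫ u in a..t, ψ u) :
    EqOn φ ψ (Icc a b) := by
  intro t ht
  have hprim {f : ℝ → ℝ} (hf : Continuous f) :
      HasDerivWithinAt (fun t ↦ ∫ u in a..t, f u) (f t) (Icc a b) t :=
    (hf.integral_hasStrictDerivAt a t).hasDerivAt.hasDerivWithinAt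
  exact (uniqueDiffOn_Icc hab t ht).eq_deriv _ (hprim hφ) ((hprim hψ).congr h (h t ht))

theorem exists_Icc_le_of_continuousAt_of_lt {g : ℝ → ℝ} {a c : ℝ} (hg : ContinuousAt g a)
    (hga : g a < c) {T : ℝ} (hT : a < T) :
    ∃ τ ∈ Ioc a T, ∃ q < c, ∀ t ∈ Icc a τ, g t ≤ q := by
  obtain ⟨q, hgq, hqc⟩ := exists_between hga
  obtain ⟨ε, hε, hball⟩ :=
    Metric.eventually_nhds_iff.1 (hg.eventually_lt continuousAt_const hgq)
  refine ⟨min T (a + ε / 2), ⟨lt_min hT (by linarith), min_le_left _ _⟩, q, hqc,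
    fun t ht ↦ (hball ?_).le⟩
  rw [Real.dist_eq, abs_of_nonneg (sub_nonneg.2 ht.1)]
  linarith [ht.2.trans (min_le_right _ _)]

/-- Banach's fixed point theorem on `C([a, b])`, for maps of functions on `ℝ` that only look at
`[a, b]`. -/
theorem exists_unique_eqOn_Icc_fixedPoint {a b q : ℝ} (hab : a ≤ b) (hq : q < 1)
    {P : (ℝ → ℝ) → ℝ → ℝ} (hP : ∀ x, Continuous x → ContinuousOn (P x) (Icc a b))
    (hPlip : ∀ x y, Continuous x → Continuous y → ∀ d,
      (∀ r ∈ Icc a b, |x r - y r| ≤ d) → ∀ t ∈ Icc a b, |P x t - P y t| ≤ q * d) :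
    ∃ x, Continuous x ∧ EqOn x (P x) (Icc a b) ∧
      ∀ y, Continuous y → EqOn y (P y) (Icc a b) → EqOn y x (Icc a b) := by
  let ext (g : C(Icc a b, ℝ)) : ℝ → ℝ := IccExtend hab g
  have hext (g : C(Icc a b, ℝ)) : Continuous (ext g) := g.continuous.Icc_extend'
  let Φ (g : C(Icc a b, ℝ)) : C(Icc a b, ℝ) :=
    ⟨fun t ↦ P (ext g) t, (hP _ (hext g)).comp_continuous continuous_subtype_val Subtype.prop⟩
  have hΦ : ContractingWith q.toNNReal Φ := by
    refine ⟨Real.toNNReal_lt_one.2 hq, LipschitzWith.of_dist_le_mul fun g₁ g₂ ↦ ?_⟩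
    refine (ContinuousMap.dist_le (by positivity)).2 fun t ↦ ?_
    refine (hPlip _ _ (hext g₁) (hext g₂) (dist g₁ g₂) (fun r hr ↦ ?_) t t.2).trans ?_
    · simpa only [ext, IccExtend_of_mem _ _ hr, ← Real.dist_eq] using
        ContinuousMap.dist_apply_le_dist _
    · exact mul_le_mul_of_nonneg_right (Real.le_coe_toNNReal q) dist_nonneg
  have hfix {g : C(Icc a b, ℝ)} : Φ g = g ↔ EqOn (ext g) (P (ext g)) (Icc a b) := by
    simp only [ContinuousMap.ext_iff, EqOn, Subtype.forall]
    exact forall₂_congr fun t ht ↦ by simp [Φ, ext, IccExtend_of_mem _ _ ht, eq_comm]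
  set x := ContractingWith.fixedPoint Φ hΦ
  refine ⟨ext x, hext x, hfix.1 (ContractingWith.fixedPoint_isFixedPt hΦ), fun y hy hyP ↦ ?_⟩
  let gy : C(Icc a b, ℝ) := ⟨fun t ↦ y t, hy.comp continuous_subtype_val⟩
  have hgy : EqOn (ext gy) y (Icc a b) := fun t ht ↦ IccExtend_of_mem _ _ ht
  have hPgy : EqOn (P (ext gy)) (P y) (Icc a b) := fun t ht ↦ by
    have := hPlip _ _ (hext gy) hy 0 (fun r hr ↦ by simp [hgy hr]) t ht
    rwa [mul_zero, abs_nonpos_iff, sub_eq_zero] at this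
  have hgx : gy = x := ContractingWith.fixedPoint_unique hΦ <| hfix.2 fun t ht ↦ by
    rw [hgy ht, hPgy ht, hyP ht]
  intro t ht
  rw [← hgy ht, hgx]

noncomputable section

namespace VolterraFirstKind

def firstKindOp (n : ℕ) (α : ℕ → ℝ → ℝ) (K : ℕ → ℝ → ℝ → ℝ) (x : ℝ → ℝ) (t : ℝ) : ℝ :=
  ∑ i ∈ Finset.Icc 1 n, ∫ s in α (i - 1) t..α i t, K i t s * x s

def jumpOp (n : ℕ) (α α' : ℕ → ℝ → ℝ) (K : ℕ → ℝ → ℝ → ℝ) (x : ℝ → ℝ) (t : ℝ) : ℝ :=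
  ∑ i ∈ Finset.Icc 1 (n - 1), α' i t * ((K i t (α i t) - K (i + 1) t (α i t)) * x (α i t))

/-- The quantity `D(t)` of the paper. -/
def jumpNorm (n : ℕ) (α α' : ℕ → ℝ → ℝ) (K : ℕ → ℝ → ℝ → ℝ) (t : ℝ) : ℝ :=
  ∑ i ∈ Finset.Icc 1 (n - 1), |α' i t * (K n t t)⁻¹| * |K i t (α i t) - K (i + 1) t (α i t)|

/-- The derivative in `t` of `firstKindOp n α K x t`, when `K' i` is `∂(K i)/∂t`. -/
def secondKindOp (n : ℕ) (α α' : ℕ → ℝ → ℝ) (K K' : ℕ → ℝ → ℝ → ℝ) (x : ℝ → ℝ) (t : ℝ) : ℝ :=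
  K n t t * x t + (jumpOp n α α' K x t + firstKindOp n α K' x t)

/-- The equation `secondKindOp n α α' K K' x t = F' t` solved for the term `x t`. -/
def fixedPointMap (n : ℕ) (α α' : ℕ → ℝ → ℝ) (K K' : ℕ → ℝ → ℝ → ℝ) (F' : ℝ → ℝ)
    (x : ℝ → ℝ) (t : ℝ) : ℝ :=
  (K n t t)⁻¹ * (F' t - (jumpOp n α α' K x t + firstKindOp n α K' x t))

variable {n : ℕ} {α α' β : ℕ → ℝ → ℝ} {K L : ℕ → ℝ → ℝ → ℝ} {x y : ℝ → ℝ} {t : ℝ}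

theorem sub_one_le_of_mem_Icc {i : ℕ} (hi : i ∈ Finset.Icc 1 n) : i - 1 ≤ n := by
  rw [Finset.mem_Icc] at hi; omega

theorem continuous_firstKindOp (hα : ∀ i ≤ n, Continuous (α i))
    (hK : ∀ i ∈ Finset.Icc 1 n, Continuous (uncurry (K i))) (hx : Continuous x) :
    Continuous (firstKindOp n α K x) :=
  continuous_finsetSum _ fun i hi ↦ continuous_parametric_intervalIntegral_moving_bounds
    (F := fun t s ↦ K i t s * x s) ((hK i hi).mul (hx.comp continuous_snd))
    (hα _ (sub_one_le_of_mem_Icc hi)) (hα i (Finset.mem_Icc.1 hi).2)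

theorem continuous_kernel_jump (hα : ∀ i ≤ n, Continuous (α i))
    (hK : ∀ i ∈ Finset.Icc 1 n, Continuous (uncurry (K i))) {i : ℕ}
    (hi : i ∈ Finset.Icc 1 (n - 1)) :
    Continuous fun t ↦ K i t (α i t) - K (i + 1) t (α i t) := by
  obtain ⟨hi1, hin⟩ : 1 ≤ i ∧ i + 1 ≤ n := by rw [Finset.mem_Icc] at hi; omega
  have hKi {j : ℕ} (hj : j ∈ Finset.Icc 1 n) : Continuous fun t ↦ K j t (α i t) :=
    (hK j hj).comp (continuous_id.prodMk (hα i (by omega)))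
  exact (hKi (Finset.mem_Icc.2 ⟨hi1, by omega⟩)).sub (hKi (Finset.mem_Icc.2 ⟨by omega, hin⟩))

theorem continuous_jumpOp (hα : ∀ i ≤ n, Continuous (α i)) (hα' : ∀ i ≤ n, Continuous (α' i))
    (hK : ∀ i ∈ Finset.Icc 1 n, Continuous (uncurry (K i))) (hx : Continuous x) :
    Continuous (jumpOp n α α' K x) :=
  continuous_finsetSum _ fun i hi ↦ have hin : i ≤ n := by rw [Finset.mem_Icc] at hi; omega
    (hα' i hin).mul ((continuous_kernel_jump hα hK hi).mul (hx.comp (hα i hin)))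

theorem firstKindOp_congr (hα : ∀ i ≤ n, α i t ∈ Icc 0 t) (hβ : ∀ i ≤ n, β i t = α i t)
    (h : ∀ i ∈ Finset.Icc 1 n, ∀ s ∈ Icc 0 t, L i t s * y s = K i t s * x s) :
    firstKindOp n β L y t = firstKindOp n α K x t := by
  refine Finset.sum_congr rfl fun i hi ↦ ?_
  have hi' := sub_one_le_of_mem_Icc hi
  rw [hβ i (Finset.mem_Icc.1 hi).2, hβ (i - 1) hi']
  exact integral_congr fun s hs ↦
    h i hi s (uIcc_subset_Icc (hα _ hi') (hα i (Finset.mem_Icc.1 hi).2) hs)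

theorem firstKindOp_sub (hK : ∀ i ∈ Finset.Icc 1 n, Continuous (K i t)) (hx : Continuous x)
    (hy : Continuous y) :
    firstKindOp n α K x t - firstKindOp n α K y t = firstKindOp n α K (x - y) t := by
  simp only [firstKindOp, ← Finset.sum_sub_distrib, Pi.sub_apply, mul_sub]
  exact Finset.sum_congr rfl fun i hi ↦ (integral_sub
    (((hK i hi).mul hx).intervalIntegrable _ _) (((hK i hi).mul hy).intervalIntegrable _ _)).symm

theorem abs_firstKindOp_le {M d : ℝ} (hM : 0 ≤ M) (hd : 0 ≤ d)
    (hα : ∀ i ≤ n, α i t ∈ Icc 0 t) (hK : ∀ i ∈ Finset.Icc 1 n, ∀ s ∈ Icc 0 t, |K i t s| ≤ M)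
    (hx : ∀ s ∈ Icc 0 t, |x s| ≤ d) :
    |firstKindOp n α K x t| ≤ n * (M * d * t) := by
  refine (Finset.abs_sum_le_sum_abs _ _).trans ?_
  refine (Finset.sum_le_card_nsmul _ _ (M * d * t) fun i hi ↦ ?_).trans (by simp)
  have hi' := sub_one_le_of_mem_Icc hi
  have h1 := hα i (Finset.mem_Icc.1 hi).2
  have h2 := hα _ hi'
  have hsub := uIoc_subset_uIcc.trans (uIcc_subset_Icc h2 h1)
  rw [← Real.norm_eq_abs]
  refine (norm_integral_le_of_norm_le_const (C := M * d) fun s hs ↦ ?_).trans ?_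
  · rw [Real.norm_eq_abs, abs_mul]
    exact mul_le_mul (hK i hi s (hsub hs)) (hx s (hsub hs)) (abs_nonneg _) hM
  · exact mul_le_mul_of_nonneg_left
      (abs_le.2 ⟨by linarith [h1.1, h2.2], by linarith [h1.2, h2.1]⟩) (mul_nonneg hM hd)

theorem jumpOp_sub :
    jumpOp n α α' K x t - jumpOp n α α' K y t = jumpOp n α α' K (x - y) t := by
  simp only [jumpOp, ← Finset.sum_sub_distrib, Pi.sub_apply]
  exact Finset.sum_congr rfl fun _ _ ↦ by ring

theorem abs_inv_mul_jumpOp_le {d : ℝ} (hx : ∀ i ∈ Finset.Icc 1 (n - 1), |x (α i t)| ≤ d) :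
    |(K n t t)⁻¹ * jumpOp n α α' K x t| ≤ jumpNorm n α α' K t * d := by
  rw [jumpNorm, jumpOp, Finset.mul_sum, Finset.sum_mul]
  refine (Finset.abs_sum_le_sum_abs _ _).trans (Finset.sum_le_sum fun i hi ↦ ?_)
  calc |(K n t t)⁻¹ * (α' i t * ((K i t (α i t) - K (i + 1) t (α i t)) * x (α i t)))|
      = |α' i t * (K n t t)⁻¹| * |K i t (α i t) - K (i + 1) t (α i t)| * |x (α i t)| := by
        simp only [abs_mul]; ring
    _ ≤ _ := mul_le_mul_of_nonneg_left (hx i hi) (by positivity)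

/-- Regularity of the data once extended continuously from `[0, T]` to `ℝ`; `K' i` plays the role
of `∂(K i)/∂t`. -/
structure IsRegularData (n : ℕ) (T : ℝ) (α α' : ℕ → ℝ → ℝ) (K K' : ℕ → ℝ → ℝ → ℝ) :
    Prop where
  one_le : 1 ≤ n
  continuous_α : ∀ i ≤ n, Continuous (α i)
  continuous_α' : ∀ i ≤ n, Continuous (α' i)
  hasDerivAt_α : ∀ i ≤ n, ∀ t ∈ Ioo 0 T, HasDerivAt (α i) (α' i t) t
  α_mem_Icc : ∀ i ≤ n, ∀ t ∈ Icc 0 T, α i t ∈ Icc 0 t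
  α_last : ∀ t ∈ Icc 0 T, α n t = t
  α'_first : ∀ t ∈ Icc 0 T, α' 0 t = 0
  α'_last : ∀ t ∈ Icc 0 T, α' n t = 1
  continuous_K : ∀ i ∈ Finset.Icc 1 n, Continuous (uncurry (K i))
  continuous_K' : ∀ i ∈ Finset.Icc 1 n, Continuous (uncurry (K' i))
  K_eq_add_integral : ∀ i ∈ Finset.Icc 1 n, ∀ t ∈ Icc 0 T, ∀ s,
    K i t s = K i 0 s + ∫ v in 0..t, K' i v s
  K_diag_ne_zero : ∀ t ∈ Icc 0 T, K n t t ≠ 0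

namespace IsRegularData

variable {T τ : ℝ} {K' : ℕ → ℝ → ℝ → ℝ} {F F' : ℝ → ℝ}

theorem last_mem (hd : IsRegularData n T α α' K K') : n ∈ Finset.Icc 1 n :=
  Finset.mem_Icc.2 ⟨hd.one_le, le_rfl⟩

theorem continuous_diag (hd : IsRegularData n T α α' K K') : Continuous fun t ↦ K n t t :=
  (hd.continuous_K n hd.last_mem).comp (continuous_id.prodMk continuous_id)

theorem α_apply_zero (hd : IsRegularData n T α α' K K') (hT : 0 ≤ T) {i : ℕ} (hi : i ≤ n) :
    α i 0 = 0 :=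
  have h := hd.α_mem_Icc i hi 0 ⟨le_rfl, hT⟩
  le_antisymm h.2 h.1

theorem continuous_secondKindOp (hd : IsRegularData n T α α' K K') (hx : Continuous x) :
    Continuous (secondKindOp n α α' K K' x) :=
  (hd.continuous_diag.mul hx).add
    ((continuous_jumpOp hd.continuous_α hd.continuous_α' hd.continuous_K hx).add
      (continuous_firstKindOp hd.continuous_α hd.continuous_K' hx))

theorem integral_kernel_mul_eq (hd : IsRegularData n T α α' K K') (hx : Continuous x)
    (ht : t ∈ Icc 0 T) {i : ℕ} (hi : i ∈ Finset.Icc 1 n) :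
    ∫ s in α (i - 1) t..α i t, K i t s * x s =
      ∫ u in 0..t, (α' i u * (K i u (α i u) * x (α i u)) -
        α' (i - 1) u * (K i u (α (i - 1) u) * x (α (i - 1) u)) +
          ∫ s in α (i - 1) u..α i u, K' i u s * x s) := by
  have hin : i ≤ n := (Finset.mem_Icc.1 hi).2
  have hin' : i - 1 ≤ n := sub_one_le_of_mem_Icc hi
  refine integral_moving_bounds_eq_integral_leibniz (G := fun u s ↦ K i u s * x s)
    (G' := fun u s ↦ K' i u s * x s)
    (((hd.continuous_K i hi).comp (Continuous.prodMk_right 0)).mul hx)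
    ((hd.continuous_K' i hi).mul (hx.comp continuous_snd))
    (hd.continuous_α _ hin') (hd.continuous_α i hin) (hd.continuous_α' _ hin')
    (hd.continuous_α' i hin) ht.1
    (fun u hu ↦ hd.hasDerivAt_α _ hin' u ⟨hu.1, hu.2.trans_le ht.2⟩)
    (fun u hu ↦ hd.hasDerivAt_α i hin u ⟨hu.1, hu.2.trans_le ht.2⟩)
    (by rw [hd.α_apply_zero (ht.1.trans ht.2) hin', hd.α_apply_zero (ht.1.trans ht.2) hin])
    fun u hu s ↦ ?_
  rw [hd.K_eq_add_integral i hi u ⟨hu.1, hu.2.trans ht.2⟩ s, integral_mul_const, add_mul]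

theorem sum_boundary_terms_eq (hd : IsRegularData n T α α' K K') {u : ℝ} (hu : u ∈ Icc 0 T) :
    ∑ i ∈ Finset.Icc 1 n, (α' i u * (K i u (α i u) * x (α i u)) -
        α' (i - 1) u * (K i u (α (i - 1) u) * x (α (i - 1) u))) =
      K n u u * x u + jumpOp n α α' K x u := by
  rw [Finset.sum_Icc_sub_pred_eq (fun i j ↦ α' j u * (K i u (α j u) * x (α j u))) hd.one_le,
    hd.α'_last u hu, hd.α_last u hu, hd.α'_first u hu, one_mul, zero_mul, sub_zero, jumpOp]
  exact congrArg _ (Finset.sum_congr rfl fun i _ ↦ by ring)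

theorem firstKindOp_eq_integral (hd : IsRegularData n T α α' K K') (hx : Continuous x)
    (ht : t ∈ Icc 0 T) :
    firstKindOp n α K x t = ∫ u in 0..t, secondKindOp n α α' K K' x u := by
  have hboundary {i j : ℕ} (hi : i ∈ Finset.Icc 1 n) (hj : j ≤ n) :
      Continuous fun u ↦ α' j u * (K i u (α j u) * x (α j u)) :=
    (hd.continuous_α' j hj).mul (((hd.continuous_K i hi).comp
      (continuous_id.prodMk (hd.continuous_α j hj))).mul (hx.comp (hd.continuous_α j hj)))
  have hterm {i : ℕ} (hi : i ∈ Finset.Icc 1 n) : Continuous fun u ↦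
      α' i u * (K i u (α i u) * x (α i u)) -
        α' (i - 1) u * (K i u (α (i - 1) u) * x (α (i - 1) u)) +
          ∫ s in α (i - 1) u..α i u, K' i u s * x s :=
    ((hboundary hi (Finset.mem_Icc.1 hi).2).sub (hboundary hi (sub_one_le_of_mem_Icc hi))).add
      (continuous_parametric_intervalIntegral_moving_bounds (F := fun u s ↦ K' i u s * x s)
        ((hd.continuous_K' i hi).mul (hx.comp continuous_snd))
        (hd.continuous_α _ (sub_one_le_of_mem_Icc hi))
        (hd.continuous_α i (Finset.mem_Icc.1 hi).2))
  rw [firstKindOp, Finset.sum_congr rfl fun i hi ↦ hd.integral_kernel_mul_eq hx ht hi,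
    ← integral_finsetSum fun i hi ↦ (hterm hi).intervalIntegrable 0 t]
  refine integral_congr fun u hu ↦ ?_
  have hu' : u ∈ Icc 0 T := ⟨(uIcc_of_le ht.1 ▸ hu).1, (uIcc_of_le ht.1 ▸ hu).2.trans ht.2⟩
  rw [Finset.sum_add_distrib, hd.sum_boundary_terms_eq hu', secondKindOp, add_assoc, firstKindOp]

theorem continuousOn_fixedPointMap (hd : IsRegularData n T α α' K K') (hF' : Continuous F')
    (hx : Continuous x) : ContinuousOn (fixedPointMap n α α' K K' F' x) (Icc 0 T) :=
  (hd.continuous_diag.continuousOn.inv₀ hd.K_diag_ne_zero).mul (hF'.sub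
    ((continuous_jumpOp hd.continuous_α hd.continuous_α' hd.continuous_K hx).add
      (continuous_firstKindOp hd.continuous_α hd.continuous_K' hx))).continuousOn

theorem continuousAt_jumpNorm (hd : IsRegularData n T α α' K K') (hT : 0 ≤ T) :
    ContinuousAt (jumpNorm n α α' K) 0 := by
  have hinv : ContinuousAt (fun t ↦ (K n t t)⁻¹) 0 :=
    hd.continuous_diag.continuousAt.inv₀ (hd.K_diag_ne_zero 0 ⟨le_rfl, hT⟩)
  refine tendsto_finsetSum _ fun i hi ↦ ?_
  have hin : i ≤ n := by rw [Finset.mem_Icc] at hi; omega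
  exact (((hd.continuous_α' i hin).continuousAt.mul hinv).abs).mul
    (continuous_kernel_jump hd.continuous_α hd.continuous_K hi).continuousAt.abs

theorem exists_abs_fixedPointMap_sub_le (hd : IsRegularData n T α α' K K') :
    ∃ C, ∀ t ∈ Icc 0 T, ∀ x y, Continuous x → Continuous y → ∀ d,
      (∀ r ∈ Icc 0 t, |x r - y r| ≤ d) →
      |fixedPointMap n α α' K K' F' x t - fixedPointMap n α α' K K' F' y t| ≤
        (jumpNorm n α α' K t + C * t) * d := by
  obtain ⟨B, hB⟩ := isCompact_Icc.exists_bound_of_continuousOn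
    (hd.continuous_diag.continuousOn.inv₀ hd.K_diag_ne_zero)
  obtain ⟨M, hM⟩ := (isCompact_Icc.prod isCompact_Icc).exists_bound_of_continuousOn
    (continuous_finsetSum (Finset.Icc 1 n) fun i hi ↦ (hd.continuous_K' i hi).abs).continuousOn
  refine ⟨B * (n * M), fun t ht x y hx hy d hxy ↦ ?_⟩
  have hd0 : 0 ≤ d := (abs_nonneg _).trans (hxy t ⟨ht.1, le_rfl⟩)
  have hB0 : 0 ≤ B := (norm_nonneg _).trans (hB 0 ⟨le_rfl, ht.1.trans ht.2⟩)
  have hα (i : ℕ) (hi : i ≤ n) : α i t ∈ Icc 0 t := hd.α_mem_Icc i hi t ht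
  have hK'M (i : ℕ) (hi : i ∈ Finset.Icc 1 n) (s : ℝ) (hs : s ∈ Icc 0 t) : |K' i t s| ≤ M := by
    have := hM (t, s) ⟨ht, hs.1, hs.2.trans ht.2⟩
    rw [Real.norm_of_nonneg (Finset.sum_nonneg fun _ _ ↦ abs_nonneg _)] at this
    exact (Finset.single_le_sum (f := fun i ↦ |K' i t s|) (fun _ _ ↦ abs_nonneg _) hi).trans this
  have hM0 : 0 ≤ M := (abs_nonneg _).trans (hK'M n hd.last_mem t ⟨ht.1, le_rfl⟩)
  have hJ := abs_inv_mul_jumpOp_le (n := n) (K := K) (α' := α') (x := x - y) (d := d)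
    fun i hi ↦ hxy _ (hα i (by rw [Finset.mem_Icc] at hi; omega))
  have hI := abs_firstKindOp_le (K := K') hM0 hd0 hα hK'M (x := x - y) hxy
  have hsplit : fixedPointMap n α α' K K' F' x t - fixedPointMap n α α' K K' F' y t =
      -((K n t t)⁻¹ * jumpOp n α α' K (x - y) t) -
        (K n t t)⁻¹ * firstKindOp n α K' (x - y) t := by
    rw [← jumpOp_sub, ← firstKindOp_sub
      (fun i hi ↦ (hd.continuous_K' i hi).comp (Continuous.prodMk_right t)) hx hy]
    simp only [fixedPointMap]
    ring
  calc _ ≤ |(K n t t)⁻¹ * jumpOp n α α' K (x - y) t| +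
        |(K n t t)⁻¹| * |firstKindOp n α K' (x - y) t| := by
        rw [hsplit, ← abs_mul, ← abs_neg ((K n t t)⁻¹ * _)]
        exact abs_sub _ _
    _ ≤ jumpNorm n α α' K t * d + B * (n * (M * d * t)) :=
        add_le_add hJ (mul_le_mul (by simpa using hB t ht) hI (abs_nonneg _) hB0)
    _ = _ := by ring

theorem firstKindOp_eq_iff_eqOn_fixedPointMap (hd : IsRegularData n T α α' K K')
    (hτ : τ ∈ Ioc 0 T) (hF : ∀ t ∈ Icc 0 T, HasDerivAt F (F' t) t) (hF' : Continuous F')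
    (hF0 : F 0 = 0) (hx : Continuous x) :
    (∀ t ∈ Icc 0 τ, firstKindOp n α K x t = F t) ↔
      EqOn x (fixedPointMap n α α' K K' F' x) (Icc 0 τ) := by
  have hτT : Icc 0 τ ⊆ Icc 0 T := Icc_subset_Icc_right hτ.2
  have h0τ : (0 : ℝ) ∈ Icc 0 τ := ⟨le_rfl, hτ.1.le⟩
  have hFint (t : ℝ) (ht : t ∈ Icc 0 τ) : F t = ∫ u in 0..t, F' u := by
    rw [eq_add_integral_of_hasDerivAt hF hF'.continuousOn (hτT ht), hF0, zero_add]
  calc (∀ t ∈ Icc 0 τ, firstKindOp n α K x t = F t)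
      ↔ ∀ t ∈ Icc 0 τ, ∫ u in 0..t, secondKindOp n α α' K K' x u = ∫ u in 0..t, F' u :=
        forall₂_congr fun t ht ↦ by rw [hd.firstKindOp_eq_integral hx (hτT ht), hFint t ht]
    _ ↔ EqOn (secondKindOp n α α' K K' x) F' (Icc 0 τ) :=
        ⟨eqOn_Icc_of_integral_eq (hd.continuous_secondKindOp hx) hF' hτ.1, fun h t ht ↦
          integral_congr fun u hu ↦ h (uIcc_subset_Icc h0τ ht hu)⟩
    _ ↔ EqOn x (fixedPointMap n α α' K K' F' x) (Icc 0 τ) := forall₂_congr fun u hu ↦ by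
        rw [secondKindOp, fixedPointMap, eq_inv_mul_iff_mul_eq₀ (hd.K_diag_ne_zero u (hτT hu)),
          eq_sub_iff_add_eq]

theorem exists_unique_solution (hd : IsRegularData n T α α' K K') (hT : 0 < T)
    (hD : jumpNorm n α α' K 0 < 1) (hF : ∀ t ∈ Icc 0 T, HasDerivAt F (F' t) t)
    (hF' : Continuous F') (hF0 : F 0 = 0) :
    ∃ τ ∈ Ioc 0 T, ∃ x : ℝ → ℝ,
      (ContinuousOn x (Icc 0 τ) ∧ ∀ t ∈ Icc 0 τ, firstKindOp n α K x t = F t) ∧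
      ∀ y : ℝ → ℝ, (ContinuousOn y (Icc 0 τ) ∧ ∀ t ∈ Icc 0 τ, firstKindOp n α K y t = F t) →
        ∀ t ∈ Icc 0 τ, y t = x t := by
  obtain ⟨C, hC⟩ := hd.exists_abs_fixedPointMap_sub_le (F' := F')
  obtain ⟨τ, hτ, q, hq, hτq⟩ := exists_Icc_le_of_continuousAt_of_lt
    ((hd.continuousAt_jumpNorm hT.le).add (continuousAt_const.mul continuousAt_id))
    (by simpa using hD) hT
  have hτT : Icc 0 τ ⊆ Icc 0 T := Icc_subset_Icc_right hτ.2
  obtain ⟨x, hxc, hxP, hx_unique⟩ := exists_unique_eqOn_Icc_fixedPoint hτ.1.le hq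
    (fun x hx ↦ (hd.continuousOn_fixedPointMap hF' hx).mono hτT)
    fun x y hx hy d hxy t ht ↦
      (hC t (hτT ht) x y hx hy d fun r hr ↦ hxy r ⟨hr.1, hr.2.trans ht.2⟩).trans
        (mul_le_mul_of_nonneg_right (hτq t ht) ((abs_nonneg _).trans (hxy t ht)))
  have hsol {z : ℝ → ℝ} (hz : Continuous z) :=
    hd.firstKindOp_eq_iff_eqOn_fixedPointMap hτ hF hF' hF0 hz
  refine ⟨τ, hτ, x, ⟨hxc.continuousOn, (hsol hxc).2 hxP⟩, fun y ⟨hyc, hy⟩ ↦ ?_⟩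
  set ŷ : ℝ → ℝ := IccExtend hτ.1.le fun t ↦ y t
  have hŷc : Continuous ŷ :=
    (hyc.comp_continuous continuous_subtype_val Subtype.prop).Icc_extend'
  have hŷ : EqOn ŷ y (Icc 0 τ) := fun t ht ↦ IccExtend_of_mem _ _ ht
  have hŷsol (t : ℝ) (ht : t ∈ Icc 0 τ) : firstKindOp n α K ŷ t = F t :=
    (firstKindOp_congr (fun i hi ↦ hd.α_mem_Icc i hi t (hτT ht)) (fun _ _ ↦ rfl)
      fun _ _ s hs ↦ by rw [hŷ ⟨hs.1, hs.2.trans ht.2⟩]).trans (hy t ht)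
  intro t ht
  rw [← hŷ ht]
  exact hx_unique ŷ hŷc ((hsol hŷc).1 hŷsol) ht

end IsRegularData

theorem mem_Icc_of_chain {n : ℕ} {T : ℝ} {α : ℕ → ℝ → ℝ} (hα0 : ∀ t, α 0 t = 0)
    (hαn : ∀ t, α n t = t) (hαinit : ∀ i, i ≤ n → α i 0 = 0)
    (hαchain : ∀ t ∈ Ioc (0:ℝ) T, ∀ i, 1 ≤ i → i ≤ n → α (i - 1) t < α i t)
    {i : ℕ} (hi : i ≤ n) {t : ℝ} (ht : t ∈ Icc 0 T) : α i t ∈ Icc 0 t := by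
  rcases ht.1.eq_or_lt with rfl | ht0
  · simp [hαinit i hi]
  have hmono : MonotoneOn (α · t) (Iic n) := monotoneOn_of_le_succ ordConnected_Iic
    fun j _ _ hj ↦ by
      simpa using (hαchain t ⟨ht0, ht.2⟩ (j + 1) (by omega) (by simpa using hj)).le
  exact ⟨(hα0 t).symm.trans_le (hmono (Nat.zero_le n) hi (Nat.zero_le i)),
    (hmono hi (mem_Iic.2 le_rfl) hi).trans_eq (hαn t)⟩

theorem isRegularData_comp_projIcc {n : ℕ} {T : ℝ} (hT : 0 ≤ T) {α α' : ℕ → ℝ → ℝ}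
    {K K' : ℕ → ℝ → ℝ → ℝ} (hn : 1 ≤ n) (hα0 : ∀ t, α 0 t = 0) (hαn : ∀ t, α n t = t)
    (hαderiv : ∀ i, i ≤ n → ∀ t ∈ Icc (0:ℝ) T, HasDerivAt (α i) (α' i t) t)
    (hα'cont : ∀ i, i ≤ n → ContinuousOn (α' i) (Icc 0 T))
    (hαinit : ∀ i, i ≤ n → α i 0 = 0)
    (hαchain : ∀ t ∈ Ioc (0:ℝ) T, ∀ i, 1 ≤ i → i ≤ n → α (i - 1) t < α i t)
    (hKcont : ∀ i, 1 ≤ i → i ≤ n →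
      ContinuousOn (fun p : ℝ × ℝ => K i p.1 p.2) (Icc 0 T ×ˢ Icc 0 T))
    (hKderiv : ∀ i, 1 ≤ i → i ≤ n → ∀ s ∈ Icc (0:ℝ) T, ∀ t ∈ Icc (0:ℝ) T,
      HasDerivAt (fun u => K i u s) (K' i t s) t)
    (hK'cont : ∀ i, 1 ≤ i → i ≤ n →
      ContinuousOn (fun p : ℝ × ℝ => K' i p.1 p.2) (Icc 0 T ×ˢ Icc 0 T))
    (hKn : ∀ t ∈ Icc (0:ℝ) T, K n t t ≠ 0) :
    IsRegularData n T (fun i t ↦ α i (projIcc 0 T hT t)) (fun i t ↦ α' i (projIcc 0 T hT t))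
      (fun i t s ↦ K i (projIcc 0 T hT t) (projIcc 0 T hT s))
      (fun i t s ↦ K' i (projIcc 0 T hT t) (projIcc 0 T hT s)) := by
  have hc : Continuous fun t ↦ (projIcc 0 T hT t : ℝ) :=
    continuous_subtype_val.comp continuous_projIcc
  have hc_mem (t : ℝ) : (projIcc 0 T hT t : ℝ) ∈ Icc 0 T := (projIcc 0 T hT t).2
  have hc_eq {t : ℝ} (ht : t ∈ Icc 0 T) : (projIcc 0 T hT t : ℝ) = t :=
    congrArg Subtype.val (projIcc_of_mem hT ht)
  have hc₂ : Continuous fun p : ℝ × ℝ ↦ ((projIcc 0 T hT p.1 : ℝ), (projIcc 0 T hT p.2 : ℝ)) :=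
    (hc.comp continuous_fst).prodMk (hc.comp continuous_snd)
  have hmem {i : ℕ} (hi : i ∈ Finset.Icc 1 n) : 1 ≤ i ∧ i ≤ n := Finset.mem_Icc.1 hi
  refine ⟨hn, fun i hi ↦ ?_, fun i hi ↦ (hα'cont i hi).comp_continuous hc hc_mem,
    fun i hi t ht ↦ ?_, fun i hi t ht ↦ ?_, fun t ht ↦ (hαn _).trans (hc_eq ht),
    fun t _ ↦ ?_, fun t _ ↦ ?_,
    fun i hi ↦ (hKcont i (hmem hi).1 (hmem hi).2).comp_continuous hc₂ fun p ↦ ⟨hc_mem _, hc_mem _⟩,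
    fun i hi ↦ (hK'cont i (hmem hi).1 (hmem hi).2).comp_continuous hc₂ fun p ↦ ⟨hc_mem _, hc_mem _⟩,
    fun i hi t ht s ↦ ?_, fun t ht ↦ by simpa only [hc_eq ht] using hKn t ht⟩
  · exact (continuousOn_of_forall_continuousAt fun t ht ↦
      (hαderiv i hi t ht).continuousAt).comp_continuous hc hc_mem
  · have ht' := Ioo_subset_Icc_self ht
    rw [hc_eq ht']
    exact (hαderiv i hi t ht').congr_of_eventuallyEq (Filter.eventually_of_mem
      (Ioo_mem_nhds ht.1 ht.2) fun u hu ↦ congrArg (α i) (hc_eq (Ioo_subset_Icc_self hu)))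
  · rw [hc_eq ht]
    exact mem_Icc_of_chain hα0 hαn hαinit hαchain hi ht
  · refine (hαderiv 0 (Nat.zero_le n) _ (hc_mem t)).unique ?_
    rw [show α 0 = fun _ ↦ 0 from funext hα0]
    exact hasDerivAt_const _ _
  · refine (hαderiv n le_rfl _ (hc_mem t)).unique ?_
    rw [show α n = id from funext hαn]
    exact hasDerivAt_id _
  · rw [hc_eq ht, hc_eq ⟨le_rfl, hT⟩, integral_congr (g := fun v ↦ K' i v (projIcc 0 T hT s))
      fun v hv ↦ by rw [hc_eq (uIcc_subset_Icc ⟨le_rfl, hT⟩ ht hv)]]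
    exact eq_add_integral_of_hasDerivAt
      (fun v hv ↦ hKderiv i (hmem hi).1 (hmem hi).2 _ (hc_mem s) v hv)
      ((hK'cont i (hmem hi).1 (hmem hi).2).comp (continuous_id.prodMk continuous_const).continuousOn
        fun v hv ↦ ⟨hv, hc_mem s⟩) ht

end VolterraFirstKind

end

open VolterraFirstKind

/-- **Theorem 1 (local part): local existence and uniqueness** for the weakly regular
Volterra integral equation of the first kind
`∑_{i=1}^{n} ∫_{α_{i-1}(t)}^{α_i(t)} K_i(t,s) x(s) ds = f(t)`.
If `D(0) < 1` then there is `τ ∈ (0,T]` such that the equation has exactly one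
continuous solution on `[0,τ]`. -/
theorem local_existence_uniqueness_weakly_regular_VIE
    (n : ℕ) (hn : 1 ≤ n) (T : ℝ) (hT : 0 < T)
    (α α' : ℕ → ℝ → ℝ) (K K' : ℕ → ℝ → ℝ → ℝ) (f f' : ℝ → ℝ)
    (hα0 : ∀ t, α 0 t = 0)
    (hαn : ∀ t, α n t = t)
    (hαderiv : ∀ i, i ≤ n → ∀ t ∈ Icc (0:ℝ) T, HasDerivAt (α i) (α' i t) t)
    (hα'cont : ∀ i, i ≤ n → ContinuousOn (α' i) (Icc 0 T))
    (hαinit : ∀ i, i ≤ n → α i 0 = 0)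
    (hαchain : ∀ t ∈ Ioc (0:ℝ) T, ∀ i, 1 ≤ i → i ≤ n → α (i - 1) t < α i t)
    (hKcont : ∀ i, 1 ≤ i → i ≤ n →
      ContinuousOn (fun p : ℝ × ℝ => K i p.1 p.2) (Icc 0 T ×ˢ Icc 0 T))
    (hKderiv : ∀ i, 1 ≤ i → i ≤ n → ∀ s ∈ Icc (0:ℝ) T, ∀ t ∈ Icc (0:ℝ) T,
      HasDerivAt (fun u => K i u s) (K' i t s) t)
    (hK'cont : ∀ i, 1 ≤ i → i ≤ n →
      ContinuousOn (fun p : ℝ × ℝ => K' i p.1 p.2) (Icc 0 T ×ˢ Icc 0 T))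
    (hfderiv : ∀ t ∈ Icc (0:ℝ) T, HasDerivAt f (f' t) t)
    (hf'cont : ContinuousOn f' (Icc 0 T))
    (hf0 : f 0 = 0)
    (hKn : ∀ t ∈ Icc (0:ℝ) T, K n t t ≠ 0)
    -- `D(0) < 1`
    (hD : ∑ i ∈ Finset.Icc 1 (n - 1),
        |α' i 0 * (K n 0 0)⁻¹| * |K i 0 (α i 0) - K (i + 1) 0 (α i 0)| < 1) :
    ∃ τ ∈ Ioc (0:ℝ) T, ∃ x : ℝ → ℝ,
      (ContinuousOn x (Icc 0 τ) ∧
        ∀ t ∈ Icc (0:ℝ) τ,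
          ∑ i ∈ Finset.Icc 1 n, ∫ s in α (i - 1) t..α i t, K i t s * x s = f t) ∧
      ∀ y : ℝ → ℝ,
        (ContinuousOn y (Icc 0 τ) ∧
          ∀ t ∈ Icc (0:ℝ) τ,
            ∑ i ∈ Finset.Icc 1 n, ∫ s in α (i - 1) t..α i t, K i t s * y s = f t) →
        ∀ t ∈ Icc (0:ℝ) τ, y t = x t := by
  have hc_eq {t : ℝ} (ht : t ∈ Icc 0 T) : (projIcc 0 T hT.le t : ℝ) = t :=
    congrArg Subtype.val (projIcc_of_mem hT.le ht)
  set αc : ℕ → ℝ → ℝ := fun i t ↦ α i (projIcc 0 T hT.le t)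
  set α'c : ℕ → ℝ → ℝ := fun i t ↦ α' i (projIcc 0 T hT.le t)
  set Kc : ℕ → ℝ → ℝ → ℝ := fun i t s ↦ K i (projIcc 0 T hT.le t) (projIcc 0 T hT.le s)
  have hreg : IsRegularData n T αc α'c Kc _ := isRegularData_comp_projIcc hT.le hn hα0 hαn
    hαderiv hα'cont hαinit hαchain hKcont hKderiv hK'cont hKn
  have hD' : jumpNorm n αc α'c Kc 0 < 1 := by
    refine lt_of_eq_of_lt (Finset.sum_congr rfl fun i hi ↦ ?_) hD
    have hin : i ≤ n := by rw [Finset.mem_Icc] at hi; omega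
    simp only [αc, α'c, Kc, hc_eq ⟨le_rfl, hT.le⟩, hαinit i hin]
  obtain ⟨τ, hτ, x, ⟨hxc, hx⟩, hx_unique⟩ := hreg.exists_unique_solution
    (F' := fun t ↦ f' (projIcc 0 T hT.le t)) hT hD'
    (fun t ht ↦ by simpa only [hc_eq ht] using hfderiv t ht)
    (hf'cont.comp_continuous (continuous_subtype_val.comp continuous_projIcc)
      fun t ↦ (projIcc 0 T hT.le t).2) hf0
  have transfer (z : ℝ → ℝ) (t : ℝ) (ht : t ∈ Icc 0 τ) :
      firstKindOp n α K z t = firstKindOp n αc Kc z t := by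
    have htT : t ∈ Icc 0 T := ⟨ht.1, ht.2.trans hτ.2⟩
    refine firstKindOp_congr (fun i hi ↦ hreg.α_mem_Icc i hi t htT)
      (fun i _ ↦ by simp only [αc, hc_eq htT])
      fun i _ s hs ↦ by simp only [Kc, hc_eq htT, hc_eq ⟨hs.1, hs.2.trans htT.2⟩]
  exact ⟨τ, hτ, x, ⟨hxc, fun t ht ↦ (transfer x t ht).trans (hx t ht)⟩,
    fun y ⟨hyc, hy⟩ ↦ hx_unique y ⟨hyc, fun t ht ↦ (transfer y t ht).symm.trans (hy t ht)⟩⟩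
end

section
/- (One-parameter family of solutions for a jump kernel; ill-posedness example.) For every real constant c, the function x(s) = c − (ln s)/(ln 2), defined for s > 0, satisfies ∫_0^{t/2} x(s) ds − ∫_{t/2}^{t} x(s) ds = t for every t > 0 (the first integral being a convergent improper integral, since s ↦ ln s is integrable on (0, t/2)). -/
open Real intervalIntegral

theorem integral_const_sub_log_div (a b c d : ℝ) :
    ∫ s in a..b, (c - log s / d) = (b - a) * c - (b * log b - a * log a - b + a) / d := by
  rw [integral_sub intervalIntegrable_const (intervalIntegrable_log'.div_const d),
    integral_const, integral_div, integral_log, smul_eq_mul]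

/-- **Ill-posedness example (one-parameter family of solutions).** For every real
constant `c`, the function `x(s) = c − ln s / ln 2` satisfies
`∫_0^{t/2} x(s) ds − ∫_{t/2}^{t} x(s) ds = t` for every `t > 0`. -/
theorem ill_posed_example_family_of_solutions (c : ℝ) :
    ∀ t : ℝ, 0 < t →
      (∫ s in (0:ℝ)..(t / 2), (c - Real.log s / Real.log 2)) -
        (∫ s in (t / 2)..t, (c - Real.log s / Real.log 2)) = t := by
  intro t ht
  have hlog2 : log 2 ≠ 0 := (log_pos one_lt_two).ne'
  -- after `log (t / 2) = log t - log 2` the `t log t` terms cancel, leaving `t log 2 / log 2`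
  rw [integral_const_sub_log_div, integral_const_sub_log_div, log_div ht.ne' two_ne_zero]
  field_simp
  ring
end

section
/- (Nonuniqueness corollary of the ill-posedness example.) The equation ∫_0^{t/2} x(s) ds − ∫_{t/2}^{t} x(s) ds = t (t > 0) has infinitely many solutions: for distinct real constants c₁ ≠ c₂, the functions x₁(s) = c₁ − (ln s)/(ln 2) and x₂(s) = c₂ − (ln s)/(ln 2) are distinct functions on (0,∞) and both satisfy the equation for every t > 0; hence the solution of this first-kind Volterra equation with jump discontinuous kernel is not unique. -/
open intervalIntegral Set

/-!
Constants are annihilated by the operator, since the two halves of the integral cancel, while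
`∫ log` computed from the antiderivative `s log s - s` shows that `log s` is mapped to
`-t log 2`. Hence every `c - log s / log 2` solves the equation.
-/

open Real

/-- The operator `x ↦ ∫₀ᵗ K(t,s) x(s) ds` for the kernel `K = 1` on `(0, t/2)`, `K = -1` on
`(t/2, t)`. -/
noncomputable def jumpKernelVolterra (x : ℝ → ℝ) (t : ℝ) : ℝ :=
  (∫ s in (0:ℝ)..t / 2, x s) - ∫ s in t / 2..t, x s

theorem jumpKernelVolterra_log (t : ℝ) : jumpKernelVolterra log t = -(t * log 2) := by
  rcases eq_or_ne t 0 with rfl | ht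
  · simp [jumpKernelVolterra]
  simp only [jumpKernelVolterra, integral_log, log_div ht two_ne_zero]
  ring

theorem jumpKernelVolterra_const_sub_log_div_log_two (c t : ℝ) :
    jumpKernelVolterra (fun s => c - log s / log 2) t = t := by
  have hlog2 : log 2 ≠ 0 := (log_pos one_lt_two).ne'
  calc jumpKernelVolterra (fun s => c - log s / log 2) t
      = (t / 2 - 0) * c - (∫ s in (0:ℝ)..t / 2, log s) / log 2
          - ((t - t / 2) * c - (∫ s in t / 2..t, log s) / log 2) := by
        simp only [jumpKernelVolterra, integral_const, smul_eq_mul, integral_div,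
          integral_sub intervalIntegrable_const (intervalIntegrable_log'.div_const _)]
    _ = -jumpKernelVolterra log t / log 2 := by
        rw [jumpKernelVolterra]
        ring
    _ = t := by
        rw [jumpKernelVolterra_log]
        field_simp

/-- **Nonuniqueness corollary of the ill-posedness example.** For distinct constants
`c₁ ≠ c₂`, the functions `x₁(s) = c₁ − ln s / ln 2` and `x₂(s) = c₂ − ln s / ln 2` are
distinct on `(0,∞)` and both satisfy
`∫_0^{t/2} x(s) ds − ∫_{t/2}^{t} x(s) ds = t` for every `t > 0`: the solution of this
first-kind Volterra equation with jump discontinuous kernel is not unique. -/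
theorem ill_posed_example_nonuniqueness (c₁ c₂ : ℝ) (hc : c₁ ≠ c₂) :
    (∃ s ∈ Ioi (0:ℝ),
      c₁ - Real.log s / Real.log 2 ≠ c₂ - Real.log s / Real.log 2) ∧
    (∀ t : ℝ, 0 < t →
      (∫ s in (0:ℝ)..(t / 2), (c₁ - Real.log s / Real.log 2)) -
        (∫ s in (t / 2)..t, (c₁ - Real.log s / Real.log 2)) = t) ∧
    (∀ t : ℝ, 0 < t →
      (∫ s in (0:ℝ)..(t / 2), (c₂ - Real.log s / Real.log 2)) -
        (∫ s in (t / 2)..t, (c₂ - Real.log s / Real.log 2)) = t) :=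
  ⟨⟨1, mem_Ioi.mpr one_pos, by simpa using hc⟩,
    fun t _ => jumpKernelVolterra_const_sub_log_div_log_two c₁ t,
    fun t _ => jumpKernelVolterra_const_sub_log_div_log_two c₂ t⟩
end

section
/- (Value of the solution at the origin, formula (6).) Let n ≥ 1 and T > 0. Let α_0, …, α_n : [0,T] → ℝ be continuously differentiable with α_0(t) = 0, α_n(t) = t, α_i(0) = 0 for all i, and 0 = α_0(t) < α_1(t) < ⋯ < α_{n-1}(t) < α_n(t) = t for t ∈ (0,T]. Let K_1, …, K_n : [0,T] × [0,T] → ℝ be continuous with continuous partial derivatives ∂K_i/∂t, let f : [0,T] → ℝ be continuously differentiable with f(0) = 0, and suppose Σ_{i=1}^{n} K_i(0,0) (α_i'(0) − α_{i-1}'(0)) ≠ 0. If x : [0,T] → ℝ is a continuous function satisfying Σ_{i=1}^{n} ∫_{α_{i-1}(t)}^{α_i(t)} K_i(t,s) x(s) ds = f(t) for all t ∈ [0,T], then x(0) = f'(0) / ( Σ_{i=1}^{n} K_i(0,0) (α_i'(0) − α_{i-1}'(0)) ). -/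
/-!
Divide the equation by `t` and let `t → 0⁺`. The right-hand side tends to `f'(0)`. For `t > 0`
the chain condition puts `[α_{i-1}(t), α_i(t)]` inside `[0, t]`, where `K_i(t,s) x(s)` is uniformly
close to `K_i(0,0) x(0)`; hence the `i`-th integral is `K_i(0,0) x(0) (α_i(t) - α_{i-1}(t)) + o(t)`,
and `(α_i(t) - α_{i-1}(t)) / t → α_i'(0) - α_{i-1}'(0)`.
-/

open Asymptotics MeasureTheory intervalIntegral Set Filter Topology

theorem monotoneOn_Iic_of_sub_one_le {β : Type*} [Preorder β] {u : ℕ → β} {n : ℕ}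
    (hu : ∀ i, 1 ≤ i → i ≤ n → u (i - 1) ≤ u i) : MonotoneOn u (Iic n) := by
  intro i _ j hjn hij
  induction j, hij using Nat.le_induction with
  | base => exact le_rfl
  | succ k hik ih => exact (ih (Nat.le_of_succ_le hjn)).trans (hu (k + 1) (by omega) hjn)

theorem HasDerivAt.tendsto_div_nhdsGT_zero {g : ℝ → ℝ} {g' : ℝ} (hg : HasDerivAt g g' 0)
    (hg0 : g 0 = 0) : Tendsto (fun t => g t / t) (𝓝[>] 0) (𝓝 g') := by
  simpa [hg0, div_eq_inv_mul] using hg.tendsto_slope_zero_right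

section ShrinkingIntegral

variable {G : ℝ → ℝ → ℝ} {S : Set (ℝ × ℝ)} {a b : ℝ → ℝ}

theorem isLittleO_integral_sub_of_continuousWithinAt
    (hG : ContinuousWithinAt (Function.uncurry G) S (0, 0))
    (hab : ∀ᶠ t in 𝓝[>] 0, 0 ≤ a t ∧ a t ≤ b t ∧ b t ≤ t)
    (hS : ∀ᶠ t in 𝓝[>] 0, ∀ s ∈ Icc (a t) (b t), (t, s) ∈ S) :
    (fun t => ∫ s in a t..b t, (G t s - G 0 0)) =o[𝓝[>] 0] id := by
  refine isLittleO_iff.2 fun ε hε => ?_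
  obtain ⟨δ, hδ, hclose⟩ := Metric.continuousWithinAt_iff.1 hG ε hε
  filter_upwards [hab, hS, Ioo_mem_nhdsGT hδ] with t ⟨ha, hab, hb⟩ hS ⟨ht, htδ⟩
  calc ‖∫ s in a t..b t, (G t s - G 0 0)‖ ≤ ε * |b t - a t| := by
        refine norm_integral_le_of_norm_le_const fun s hs => ?_
        rw [uIoc_of_le hab] at hs
        have hdist : dist (t, s) (0, 0) < δ := by
          rw [Prod.dist_eq, Real.dist_eq, Real.dist_eq, sub_zero, sub_zero,
            abs_of_pos ht, abs_of_nonneg (ha.trans hs.1.le)]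
          exact max_lt htδ (by linarith [hs.2])
        exact (hclose (hS s (Ioc_subset_Icc_self hs)) hdist).le
    _ ≤ ε * ‖id t‖ := by
        rw [id, Real.norm_of_nonneg ht.le, abs_of_nonneg (sub_nonneg.2 hab)]
        gcongr
        linarith

theorem tendsto_integral_div_of_continuousWithinAt {c : ℝ}
    (hG : ContinuousWithinAt (Function.uncurry G) S (0, 0))
    (hab : ∀ᶠ t in 𝓝[>] 0, 0 ≤ a t ∧ a t ≤ b t ∧ b t ≤ t)
    (hS : ∀ᶠ t in 𝓝[>] 0, ∀ s ∈ Icc (a t) (b t), (t, s) ∈ S)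
    (hint : ∀ᶠ t in 𝓝[>] 0, IntervalIntegrable (G t) volume (a t) (b t))
    (hc : Tendsto (fun t => (b t - a t) / t) (𝓝[>] 0) (𝓝 c)) :
    Tendsto (fun t => (∫ s in a t..b t, G t s) / t) (𝓝[>] 0) (𝓝 (G 0 0 * c)) := by
  have hlim := (isLittleO_integral_sub_of_continuousWithinAt hG hab hS).tendsto_div_nhds_zero.add
    (hc.const_mul (G 0 0))
  rw [zero_add] at hlim
  refine hlim.congr' ?_
  filter_upwards [hint] with t ht
  rw [id, integral_sub ht intervalIntegrable_const, intervalIntegral.integral_const, smul_eq_mul]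
  ring

theorem tendsto_integral_div_of_continuousOn {T c : ℝ} (hT : 0 < T)
    (hG : ContinuousOn (Function.uncurry G) (Icc 0 T ×ˢ Icc 0 T))
    (hab : ∀ t ∈ Ioc 0 T, 0 ≤ a t ∧ a t ≤ b t ∧ b t ≤ t)
    (hc : Tendsto (fun t => (b t - a t) / t) (𝓝[>] 0) (𝓝 c)) :
    Tendsto (fun t => (∫ s in a t..b t, G t s) / t) (𝓝[>] 0) (𝓝 (G 0 0 * c)) := by
  have h0T : (0 : ℝ) ∈ Icc 0 T := left_mem_Icc.2 hT.le
  have hsub : ∀ t ∈ Ioc 0 T, Icc (a t) (b t) ⊆ Icc 0 T := fun t ht =>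
    Icc_subset_Icc (hab t ht).1 ((hab t ht).2.2.trans ht.2)
  have hIoc : ∀ᶠ t in 𝓝[>] (0 : ℝ), t ∈ Ioc 0 T := Ioc_mem_nhdsGT hT
  refine tendsto_integral_div_of_continuousWithinAt (hG _ ⟨h0T, h0T⟩)
    (hIoc.mono hab) (hIoc.mono fun t ht s hs => ⟨Ioc_subset_Icc_self ht, hsub t ht hs⟩) ?_ hc
  filter_upwards [hIoc] with t ht
  refine ContinuousOn.intervalIntegrable_of_Icc (hab t ht).2.1 ?_
  exact (hG.comp (continuous_const.prodMk continuous_id).continuousOn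
    fun s hs => ⟨Ioc_subset_Icc_self ht, hs⟩).mono (hsub t ht)

end ShrinkingIntegral

theorem solution_value_at_origin_general
    (n : ℕ) (T : ℝ) (hT : 0 < T)
    (α α' : ℕ → ℝ → ℝ) (K : ℕ → ℝ → ℝ → ℝ) (f f' : ℝ → ℝ)
    (hα0 : ∀ t, α 0 t = 0)
    (hαn : ∀ t, α n t = t)
    (hαderiv : ∀ i, i ≤ n → ∀ t ∈ Icc (0:ℝ) T, HasDerivAt (α i) (α' i t) t)
    (hαinit : ∀ i, i ≤ n → α i 0 = 0)
    (hαchain : ∀ t ∈ Ioc (0:ℝ) T, ∀ i, 1 ≤ i → i ≤ n → α (i - 1) t < α i t)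
    (hKcont : ∀ i, 1 ≤ i → i ≤ n →
      ContinuousOn (fun p : ℝ × ℝ => K i p.1 p.2) (Icc 0 T ×ˢ Icc 0 T))
    (hfderiv : ∀ t ∈ Icc (0:ℝ) T, HasDerivAt f (f' t) t)
    (hf0 : f 0 = 0)
    (hdenom : ∑ i ∈ Finset.Icc 1 n, K i 0 0 * (α' i 0 - α' (i - 1) 0) ≠ 0)
    (x : ℝ → ℝ) (hx : ContinuousOn x (Icc 0 T))
    (hsol : ∀ t ∈ Icc (0:ℝ) T,
      ∑ i ∈ Finset.Icc 1 n, ∫ s in α (i - 1) t..α i t, K i t s * x s = f t) :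
    x 0 = f' 0 / ∑ i ∈ Finset.Icc 1 n, K i 0 0 * (α' i 0 - α' (i - 1) 0) := by
  have h0T : (0 : ℝ) ∈ Icc 0 T := left_mem_Icc.2 hT.le
  have hslope : ∀ i ≤ n, Tendsto (fun t => α i t / t) (𝓝[>] 0) (𝓝 (α' i 0)) := fun i hi =>
    (hαderiv i hi 0 h0T).tendsto_div_nhdsGT_zero (hαinit i hi)
  have hmono : ∀ t ∈ Ioc 0 T, MonotoneOn (α · t) (Iic n) := fun t ht =>
    monotoneOn_Iic_of_sub_one_le fun j hj1 hjn => (hαchain t ht j hj1 hjn).le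
  have hterm : ∀ i ∈ Finset.Icc 1 n,
      Tendsto (fun t => (∫ s in α (i - 1) t..α i t, K i t s * x s) / t) (𝓝[>] 0)
        (𝓝 (K i 0 0 * x 0 * (α' i 0 - α' (i - 1) 0))) := by
    intro i hi
    obtain ⟨hi1, hin⟩ := Finset.mem_Icc.1 hi
    refine tendsto_integral_div_of_continuousOn (G := fun t s => K i t s * x s) hT
      ((hKcont i hi1 hin).mul (hx.comp continuousOn_snd fun p hp => hp.2))
      (fun t ht => ⟨?_, ?_, ?_⟩)
      (by simpa only [sub_div] using (hslope i hin).sub (hslope (i - 1) (by omega)))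
    · simpa only [hα0] using
        hmono t ht (mem_Iic.2 n.zero_le) (mem_Iic.2 (by omega)) (i - 1).zero_le
    · exact hmono t ht (mem_Iic.2 (by omega)) (mem_Iic.2 hin) (i.sub_le 1)
    · simpa only [hαn] using hmono t ht (mem_Iic.2 hin) (mem_Iic.2 le_rfl) hin
  have hsum : Tendsto (fun t => f t / t) (𝓝[>] 0)
      (𝓝 (∑ i ∈ Finset.Icc 1 n, K i 0 0 * x 0 * (α' i 0 - α' (i - 1) 0))) := by
    refine (tendsto_finsetSum _ hterm).congr' ?_
    filter_upwards [Ioc_mem_nhdsGT hT] with t ht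
    rw [← Finset.sum_div, hsol t (Ioc_subset_Icc_self ht)]
  have hlim := tendsto_nhds_unique hsum ((hfderiv 0 h0T).tendsto_div_nhdsGT_zero hf0)
  rw [eq_div_iff hdenom, ← hlim, Finset.mul_sum]
  exact Finset.sum_congr rfl fun i _ => by ring

/-- **Value of the solution at the origin (formula (6)).** If `x` is a continuous
solution on `[0,T]` of the weakly regular Volterra equation
`∑_{i=1}^{n} ∫_{α_{i-1}(t)}^{α_i(t)} K_i(t,s) x(s) ds = f(t)` and
`∑_{i=1}^{n} K_i(0,0)(α_i'(0) − α_{i-1}'(0)) ≠ 0`, then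
`x(0) = f'(0) / ∑_{i=1}^{n} K_i(0,0)(α_i'(0) − α_{i-1}'(0))`. -/
theorem solution_value_at_origin
    (n : ℕ) (hn : 1 ≤ n) (T : ℝ) (hT : 0 < T)
    (α α' : ℕ → ℝ → ℝ) (K K' : ℕ → ℝ → ℝ → ℝ) (f f' : ℝ → ℝ)
    (hα0 : ∀ t, α 0 t = 0)
    (hαn : ∀ t, α n t = t)
    (hαderiv : ∀ i, i ≤ n → ∀ t ∈ Icc (0:ℝ) T, HasDerivAt (α i) (α' i t) t)
    (hα'cont : ∀ i, i ≤ n → ContinuousOn (α' i) (Icc 0 T))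
    (hαinit : ∀ i, i ≤ n → α i 0 = 0)
    (hαchain : ∀ t ∈ Ioc (0:ℝ) T, ∀ i, 1 ≤ i → i ≤ n → α (i - 1) t < α i t)
    (hKcont : ∀ i, 1 ≤ i → i ≤ n →
      ContinuousOn (fun p : ℝ × ℝ => K i p.1 p.2) (Icc 0 T ×ˢ Icc 0 T))
    (hKderiv : ∀ i, 1 ≤ i → i ≤ n → ∀ s ∈ Icc (0:ℝ) T, ∀ t ∈ Icc (0:ℝ) T,
      HasDerivAt (fun u => K i u s) (K' i t s) t)
    (hK'cont : ∀ i, 1 ≤ i → i ≤ n →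
      ContinuousOn (fun p : ℝ × ℝ => K' i p.1 p.2) (Icc 0 T ×ˢ Icc 0 T))
    (hfderiv : ∀ t ∈ Icc (0:ℝ) T, HasDerivAt f (f' t) t)
    (hf'cont : ContinuousOn f' (Icc 0 T))
    (hf0 : f 0 = 0)
    (hdenom : ∑ i ∈ Finset.Icc 1 n, K i 0 0 * (α' i 0 - α' (i - 1) 0) ≠ 0)
    (x : ℝ → ℝ) (hx : ContinuousOn x (Icc 0 T))
    (hsol : ∀ t ∈ Icc (0:ℝ) T,
      ∑ i ∈ Finset.Icc 1 n, ∫ s in α (i - 1) t..α i t, K i t s * x s = f t) :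
    x 0 = f' 0 / ∑ i ∈ Finset.Icc 1 n, K i 0 0 * (α' i 0 - α' (i - 1) 0) :=
  solution_value_at_origin_general n T hT α α' K f f' hα0 hαn hαderiv hαinit hαchain hKcont hfderiv
    hf0 hdenom x hx hsol
end
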